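/- The Thue-Morse sequence is cube-free: it contains no nonempty factor of the form www. -/

import Mathlib

/-!
Since `t (2n) = t n` and `t (2n + 1) = t n + 1`, a cube of even period `2m` in `t` halves to a
cube of period `m`, so it suffices to exclude cubes of odd period `2m + 1`. In such a cube, an
aligned pair of positions `2j, 2j + 1` is shifted by the period onto `2(j+m) + 1, 2(j+m+1)`;
comparing values gives `t (j + m) = t (j + m + 1)`, which is impossible when `j + m` is even
(and for `m = 0` the cube itself contains an aligned pair with equal values).
-/

open Fin.NatCast in
/-- The Thue-Morse sequence: parity of the number of 1 bits of `n`. -/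
def thueMorse (n : ℕ) : Fin 2 := (n.bits.count true : Fin 2)

/-- `w` is the factor of the infinite sequence `s` starting at position `i`. -/
def FactorAt {α : Type*} (s : ℕ → α) (i : ℕ) (w : List α) : Prop :=
  w = (List.range w.length).map (fun j => s (i + j))

/-- `w` is a factor (contiguous finite subword) of the infinite sequence `s`. -/
def IsFactor {α : Type*} (s : ℕ → α) (w : List α) : Prop := ∃ i, FactorAt s i w

section

variable {α : Type*} {s : ℕ → α} {i : ℕ} {w : List α}

theorem factorAt_iff_getElem :
    FactorAt s i w ↔ ∀ k (hk : k < w.length), w[k] = s (i + k) := by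
  rw [FactorAt, List.ext_get_iff]
  simp

def CubeAt (s : ℕ → α) (i p : ℕ) : Prop := ∀ k < 2 * p, s (i + k + p) = s (i + k)

theorem FactorAt.cubeAt (h : FactorAt s i (w ++ w ++ w)) : CubeAt s i w.length := by
  rw [factorAt_iff_getElem] at h
  intro k hk
  have hk' : k < (w ++ w).length := by simpa [two_mul] using hk
  calc s (i + k + w.length) = (w ++ w ++ w)[w.length + k]'(by simp; omega) := by
        rw [h, add_right_comm, add_assoc]
    _ = (w ++ w)[k] := by simp [List.getElem_append_right]
    _ = (w ++ w ++ w)[k]'(by simp; omega) := (List.getElem_append_left hk').symm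
    _ = s (i + k) := h k _

end

@[simp]
theorem thueMorse_two_mul (n : ℕ) : thueMorse (2 * n) = thueMorse n := by
  rcases Nat.eq_zero_or_pos n with rfl | hn
  · rfl
  · simp [thueMorse, Nat.bit0_bits n hn.ne']

open Fin.NatCast in
@[simp]
theorem thueMorse_two_mul_add_one (n : ℕ) : thueMorse (2 * n + 1) = thueMorse n + 1 := by
  simp [thueMorse, Nat.bit1_bits]

theorem thueMorse_two_mul_add_one_ne (n : ℕ) : thueMorse (2 * n + 1) ≠ thueMorse (2 * n) := by
  simp only [thueMorse_two_mul, thueMorse_two_mul_add_one]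
  omega

theorem cubeAt_thueMorse_of_two_mul {i m : ℕ} (h : CubeAt thueMorse i (2 * m)) :
    CubeAt thueMorse ((i + 1) / 2) m := by
  intro k hk
  have := h (2 * ((i + 1) / 2 + k) - i) (by omega)
  rwa [Nat.add_sub_cancel' (by omega), ← mul_add, thueMorse_two_mul, thueMorse_two_mul] at this

theorem not_cubeAt_thueMorse_two_mul_add_one (i m : ℕ) :
    ¬ CubeAt thueMorse i (2 * m + 1) := by
  intro h
  have aligned : ∀ j, i ≤ 2 * j → 2 * j + 1 < i + 2 * (2 * m + 1) →
      thueMorse (j + m + 1) = thueMorse (j + m) := by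
    intro j h₁ h₂
    have even := h (2 * j - i) (by omega)
    have odd := h (2 * j + 1 - i) (by omega)
    rw [Nat.add_sub_cancel' h₁, show 2 * j + (2 * m + 1) = 2 * (j + m) + 1 by ring,
      thueMorse_two_mul, thueMorse_two_mul_add_one] at even
    rw [Nat.add_sub_cancel' (by omega), show 2 * j + 1 + (2 * m + 1) = 2 * (j + m + 1) by ring,
      thueMorse_two_mul, thueMorse_two_mul_add_one] at odd
    omega
  rcases Nat.eq_zero_or_pos m with rfl | hm
  · have := h (2 * ((i + 1) / 2) - i) (by omega)
    rw [Nat.add_sub_cancel' (by omega)] at this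
    exact thueMorse_two_mul_add_one_ne _ this
  · obtain ⟨j, k, h₁, h₂, hk⟩ :
        ∃ j k, i ≤ 2 * j ∧ 2 * j + 1 < i + 2 * (2 * m + 1) ∧ j + m = 2 * k := by
      obtain ⟨k, hk | hk⟩ := Nat.even_or_odd' ((i + 1) / 2 + m)
      · exact ⟨(i + 1) / 2, k, by omega, by omega, hk⟩
      · exact ⟨(i + 1) / 2 + 1, k + 1, by omega, by omega, by omega⟩
    have := aligned j h₁ h₂
    rw [hk] at this
    exact thueMorse_two_mul_add_one_ne k this

theorem not_cubeAt_thueMorse {p : ℕ} (hp : 0 < p) (i : ℕ) : ¬ CubeAt thueMorse i p := by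
  induction p using Nat.strong_induction_on generalizing i with
  | _ p ih =>
    obtain ⟨m, rfl | rfl⟩ := Nat.even_or_odd' p
    · exact fun h => ih m (by omega) (by omega) _ (cubeAt_thueMorse_of_two_mul h)
    · exact not_cubeAt_thueMorse_two_mul_add_one i m

/-- the Thue–Morse sequence is cube-free: it contains no nonempty
factor of the form `w·w·w`. -/
theorem thueMorse_cubeFree :
    ¬ ∃ w : List (Fin 2), w ≠ [] ∧ IsFactor thueMorse (w ++ w ++ w) := by
  rintro ⟨w, hw, i, hi⟩
  exact not_cubeAt_thueMorse (List.length_pos_iff.mpr hw) i hi.cubeAt
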